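/- Suppose f ∈ G has a sequence (Y_n) of nontrivial orbitals with every element of Y_n less than every element of Y_{n+1} for each n. Then there is a sequence (X_n) of nontrivial orbitals of f such that: all X_n have the same parity (either a < f a for all a in every X_n, or f a < a for all a in every X_n); each X_n is bounded above and below in ℚ, so has real infimum a_n and real supremum b_n; b_n < a_{n+1} for every n; either all a_n are rational or all a_n are irrational; and either all b_n are rational or all b_n are irrational. -/
import Mathlib


open FirstOrder

/-- `G` is the group of all order-automorphisms of `(ℚ, <)` under composition. -/
abbrev G : Type := ℚ ≃o ℚ

/-- The support of `f ∈ G`: the set of points moved by `f`. -/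
def support (f : G) : Set ℚ := {a : ℚ | f a ≠ a}

/-- The orbital relation of `f`: `a ~_f b` iff `f^m a ≤ b ≤ f^n a` for some integers `m, n`. -/
def orbRel (f : G) (a b : ℚ) : Prop := ∃ m n : ℤ, (f ^ m) a ≤ b ∧ b ≤ (f ^ n) a

/-- An orbital of `f` is an equivalence class of the orbital relation of `f`. -/
def IsOrbital (f : G) (X : Set ℚ) : Prop := ∃ a : ℚ, X = {b : ℚ | orbRel f a b}

/-- An orbital is nontrivial if it contains a point moved by `f`. -/
def IsNontrivialOrbital (f : G) (X : Set ℚ) : Prop :=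
  IsOrbital f X ∧ ∃ a ∈ X, f a ≠ a

/-- A bump is a non-identity element of `G` with exactly one nontrivial orbital. -/
def IsBump (f : G) : Prop := f ≠ 1 ∧ ∃! X : Set ℚ, IsNontrivialOrbital f X

/-- `g` is a restriction of `f`: the support of `g` is contained in that of `f`, and
`g` agrees with `f` on the support of `g`. -/
def IsRestriction (g f : G) : Prop :=
  support g ⊆ support f ∧ ∀ a ∈ support g, g a = f a

lemma zpow_apply_add (f : G) (m n : ℤ) (a : ℚ) : (f ^ (m+n)) a = (f^m) ((f^n) a) := by
  rw [zpow_add]; rfl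

lemma zpow_mono (f : G) (m : ℤ) {a b : ℚ} (h : a ≤ b) : (f^m) a ≤ (f^m) b :=
  (f^m).le_iff_le.mpr h

lemma zpow_smono (f : G) (m : ℤ) {a b : ℚ} (h : a < b) : (f^m) a < (f^m) b :=
  (f^m).lt_iff_lt.mpr h

lemma apply_comm_zpow (f : G) (m : ℤ) (a : ℚ) : f ((f^m) a) = (f^m) (f a) := by
  have h1 : f ((f^m) a) = (f^(1+m)) a := by rw [zpow_apply_add]; rfl
  have h2 : (f^m) (f a) = (f^(m+1)) a := by rw [zpow_apply_add]; rfl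
  rw [h1, h2, add_comm]

lemma le_zpow_nat (f : G) {a : ℚ} (h : a ≤ f a) (k : ℕ) : a ≤ (f^(k:ℤ)) a := by
  induction k with
  | zero => simp
  | succ k ih =>
    have : (f^((k:ℤ)+1)) a = f ((f^(k:ℤ)) a) := by
      rw [add_comm, zpow_apply_add]; rfl
    push_cast
    rw [this]
    calc a ≤ (f^(k:ℤ)) a := ih
    _ ≤ f ((f^(k:ℤ)) a) := by
        rw [apply_comm_zpow]; exact zpow_mono f _ h

lemma zpow_le_zpow_exp (f : G) {a : ℚ} (h : a ≤ f a) {m n : ℤ} (hmn : m ≤ n) :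
    (f^m) a ≤ (f^n) a := by
  set b := (f^m) a with hb
  have hbf : b ≤ f b := by
    rw [hb, apply_comm_zpow]; exact zpow_mono f _ h
  have h1 : (f^n) a = (f^(n-m)) b := by rw [hb, ← zpow_apply_add, sub_add_cancel]
  rw [h1]
  have h2 : (n - m) = ((n-m).toNat : ℤ) := (Int.toNat_of_nonneg (by omega)).symm
  rw [h2]
  exact le_zpow_nat f hbf _

lemma zpow_lt_zpow_exp (f : G) {a : ℚ} (h : a < f a) {m n : ℤ} (hmn : m < n) :
    (f^m) a < (f^n) a := by
  set b := (f^m) a with hb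
  have hbf : b < f b := by
    rw [hb, apply_comm_zpow]; exact zpow_smono f _ h
  have h1 : (f^n) a = (f^(n-m-1)) (f b) := by
    have hfb : f b = (f^(1+m)) a := by rw [hb, zpow_apply_add, zpow_one]
    have he : n - m - 1 + (1 + m) = n := by omega
    rw [hfb, ← zpow_apply_add, he]
  rw [h1]
  calc b < f b := hbf
  _ ≤ (f^(n-m-1)) (f b) := by
      have hffb : f b ≤ f (f b) := (f.le_iff_le).mpr hbf.le
      have := zpow_le_zpow_exp f hffb (m := 0) (n := n-m-1) (by omega)
      simpa using this

lemma orbRel_refl (f : G) (a : ℚ) : orbRel f a a := ⟨0, 0, by simp⟩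

lemma orbRel_symm {f : G} {a b : ℚ} (h : orbRel f a b) : orbRel f b a := by
  obtain ⟨m, n, h1, h2⟩ := h
  refine ⟨-n, -m, ?_, ?_⟩
  · have := zpow_mono f (-n) h2
    rwa [← zpow_apply_add, neg_add_cancel, zpow_zero] at this
    
  · have := zpow_mono f (-m) h1
    rwa [← zpow_apply_add, neg_add_cancel, zpow_zero] at this

lemma orbRel_trans {f : G} {a b c : ℚ} (h : orbRel f a b) (h' : orbRel f b c) :
    orbRel f a c := by
  obtain ⟨m, n, h1, h2⟩ := h
  obtain ⟨p, q, h3, h4⟩ := h'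
  refine ⟨p + m, q + n, ?_, ?_⟩
  · rw [zpow_apply_add]; exact le_trans (zpow_mono f p h1) h3
  · rw [zpow_apply_add]; exact le_trans h4 (zpow_mono f q h2)

lemma parity_pos {f : G} {a b : ℚ} (ha : a < f a) (hab : orbRel f a b) : b < f b := by
  by_contra hb
  push_neg at hb
  obtain ⟨m, n, h1, h2⟩ := hab
  have key : ∀ k : ℕ, (f^(m + k)) a ≤ b := by
    intro k
    induction k with
    | zero => simpa using h1
    | succ k ih =>
      have : (f^(m + (k+1:ℕ))) a = f ((f^(m+k)) a) := by
        push_cast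
        have : (m + ((k:ℤ)+1)) = 1 + (m + k) := by ring
        rw [this, zpow_apply_add]; rfl
      rw [this]
      calc f ((f^(m+(k:ℤ))) a) ≤ f b := (f.le_iff_le).mpr ih
      _ ≤ b := hb
  have hk := key (n + 1 - m).toNat
  have h3 : (f^(n+1)) a ≤ (f^(m + ((n+1-m).toNat : ℤ))) a :=
    zpow_le_zpow_exp f ha.le (by omega)
  have h4 : (f^n) a < (f^(n+1)) a := zpow_lt_zpow_exp f ha (by omega)
  exact absurd (le_trans h3 hk) (not_le.mpr (lt_of_le_of_lt h2 h4))

lemma inv_apply_lt {f : G} {a : ℚ} (h : f a < a) : a < f⁻¹ a := by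
  have := (f⁻¹ : G).lt_iff_lt.mpr h
  have hfa : (f⁻¹ : G) (f a) = a := by simp
  rwa [hfa] at this

lemma orbRel_inv {f : G} {a b : ℚ} (h : orbRel f a b) : orbRel f⁻¹ a b := by
  obtain ⟨m, n, h1, h2⟩ := h
  refine ⟨-m, -n, ?_, ?_⟩
  · rwa [zpow_neg, inv_zpow, inv_inv]
  · rwa [zpow_neg, inv_zpow, inv_inv]

lemma parity_neg {f : G} {a b : ℚ} (ha : f a < a) (hab : orbRel f a b) : f b < b := by
  have h1 : b < f⁻¹ b := parity_pos (inv_apply_lt ha) (orbRel_inv hab)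
  have := f.lt_iff_lt.mpr h1
  have hfb : f ((f⁻¹ : G) b) = b := by simp
  rwa [hfb] at this

lemma orbital_parity_pos {f : G} {X : Set ℚ} (hX : IsOrbital f X) {a b : ℚ}
    (haX : a ∈ X) (hbX : b ∈ X) (ha : a < f a) : b < f b := by
  obtain ⟨c, rfl⟩ := hX
  exact parity_pos ha (orbRel_trans (orbRel_symm haX) hbX)

lemma orbital_parity_neg {f : G} {X : Set ℚ} (hX : IsOrbital f X) {a b : ℚ}
    (haX : a ∈ X) (hbX : b ∈ X) (ha : f a < a) : f b < b := by
  obtain ⟨c, rfl⟩ := hX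
  exact parity_neg ha (orbRel_trans (orbRel_symm haX) hbX)

lemma mem_orbital_apply {f : G} {X : Set ℚ} (hX : IsOrbital f X) {a : ℚ}
    (haX : a ∈ X) : f a ∈ X := by
  obtain ⟨c, rfl⟩ := hX
  obtain ⟨m, n, h1, h2⟩ := haX
  refine ⟨m+1, n+1, ?_, ?_⟩
  · rw [add_comm, zpow_apply_add, zpow_one]; exact f.le_iff_le.mpr h1
  · rw [add_comm, zpow_apply_add, zpow_one]; exact f.le_iff_le.mpr h2

/-- Given an increasing sequence `Y` of nontrivial orbitals of `f`, one can thin out to a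
sequence `X` of nontrivial orbitals all of the same parity, each bounded above and below, with
real infima `a n` and suprema `b n` satisfying `b n < a (n+1)`, such that either all `a n` are
rational or all are irrational, and either all `b n` are rational or all are irrational. -/
theorem thin_out_orbital_sequence
    (f : G) (Y : ℕ → Set ℚ)
    (hY : ∀ n, IsNontrivialOrbital f (Y n))
    (hYlt : ∀ n, ∀ a ∈ Y n, ∀ b ∈ Y (n + 1), a < b) :
    ∃ X : ℕ → Set ℚ,
      (∀ n, IsNontrivialOrbital f (X n)) ∧
      ((∀ n, ∀ a ∈ X n, a < f a) ∨ (∀ n, ∀ a ∈ X n, f a < a)) ∧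
      (∀ n, BddAbove (X n) ∧ BddBelow (X n)) ∧
      ∃ a b : ℕ → ℝ,
        (∀ n, IsGLB ((fun q : ℚ => (q : ℝ)) '' X n) (a n)) ∧
        (∀ n, IsLUB ((fun q : ℚ => (q : ℝ)) '' X n) (b n)) ∧
        (∀ n, b n < a (n + 1)) ∧
        ((∀ n, ∃ q : ℚ, a n = (q : ℝ)) ∨ (∀ n, ∀ q : ℚ, a n ≠ (q : ℝ))) ∧
        ((∀ n, ∃ q : ℚ, b n = (q : ℝ)) ∨ (∀ n, ∀ q : ℚ, b n ≠ (q : ℝ))) := by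
  classical
  have hpt : ∀ n, ∃ a ∈ Y n, f a ≠ a := fun n => (hY n).2
  have hne : ∀ n, (Y n).Nonempty := fun n => (hpt n).imp (fun a h => h.1)
  have hlt : ∀ i j, i < j → ∀ a ∈ Y i, ∀ b ∈ Y j, a < b := by
    intro i j hij
    have hij' : i + 1 ≤ j := hij
    clear hij
    induction j, hij' using Nat.le_induction with
    | base => exact hYlt i
    | succ j hj ih =>
      intro a ha b hb
      obtain ⟨c, hc⟩ := hne j
      exact lt_trans (ih a ha c hc) (hYlt j c hc b hb)
  set e : ℚ → ℝ := fun q : ℚ => (q : ℝ) with he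
  set t : ℕ → Bool × Bool × Bool := fun n =>
    (decide (∃ q : ℚ, sInf (e '' Y n) = (q:ℝ)),
     decide (∃ q : ℚ, sSup (e '' Y n) = (q:ℝ)),
     decide (∃ a ∈ Y n, a < f a)) with ht
  obtain ⟨v, hv⟩ := Finite.exists_infinite_fiber t
  haveI := hv
  set S := t ⁻¹' {v} with hS
  let h : ℕ ↪o ℕ := Nat.orderEmbeddingOfSet S
  set g : ℕ → ℕ := fun n => h (2*n+1) with hg
  have hgdef : ∀ n, g n = h (2*n+1) := fun n => rfl
  have hmemS : ∀ n, t (g n) = v := by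
    intro n
    have hr : g n ∈ Set.range h := ⟨2*n+1, rfl⟩
    rw [show Set.range h = S from Nat.orderEmbeddingOfSet_range S] at hr
    simpa [hS] using hr
  have hgge : ∀ n, 2*n+1 ≤ g n := fun n => h.strictMono.le_apply
  have hg1 : ∀ n, 0 < g n := fun n => lt_of_lt_of_le (by omega) (hgge n)
  have hggap : ∀ n, g n + 1 < g (n+1) := by
    intro n
    have h1 : h (2*n+1) < h (2*n+2) := h.strictMono (by omega)
    have h2 : h (2*n+2) < h (2*n+3) := h.strictMono (by omega)
    have h3 : g (n+1) = h (2*n+3) := by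
      have h4 : 2*(n+1)+1 = 2*n+3 := by ring
      rw [hgdef, h4]
    rw [h3, hgdef]
    omega
  -- component extraction
  have hInfC : ∀ n, decide (∃ q : ℚ, sInf (e '' Y (g n)) = (q:ℝ)) = v.1 := by
    intro n
    have := congrArg (fun p => p.1) (hmemS n)
    simpa [ht] using this
  have hSupC : ∀ n, decide (∃ q : ℚ, sSup (e '' Y (g n)) = (q:ℝ)) = v.2.1 := by
    intro n
    have := congrArg (fun p => p.2.1) (hmemS n)
    simpa [ht] using this
  have hParC : ∀ n, decide (∃ a ∈ Y (g n), a < f a) = v.2.2 := by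
    intro n
    have := congrArg (fun p => p.2.2) (hmemS n)
    simpa [ht] using this
  -- bounds in ℚ
  have hbddQ : ∀ n, BddAbove (Y (g n)) ∧ BddBelow (Y (g n)) := by
    intro n
    obtain ⟨c, hc⟩ := hne (g n + 1)
    obtain ⟨d, hd⟩ := hne 0
    exact ⟨⟨c, fun x hx => (hYlt (g n) x hx c hc).le⟩,
           ⟨d, fun x hx => (hlt 0 (g n) (hg1 n) d hd x hx).le⟩⟩
  -- bounds in ℝ
  have hAne : ∀ n, (e '' Y (g n)).Nonempty := fun n => (hne (g n)).image e
  have hAbdda : ∀ n, BddAbove (e '' Y (g n)) := by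
    intro n
    obtain ⟨c, hc⟩ := (hbddQ n).1
    refine ⟨(c:ℝ), ?_⟩
    rintro - ⟨x, hx, rfl⟩
    simp only [he]
    exact_mod_cast hc hx
  have hAbddb : ∀ n, BddBelow (e '' Y (g n)) := by
    intro n
    obtain ⟨c, hc⟩ := (hbddQ n).2
    refine ⟨(c:ℝ), ?_⟩
    rintro - ⟨x, hx, rfl⟩
    simp only [he]
    exact_mod_cast hc hx
  refine ⟨fun n => Y (g n), fun n => hY (g n), ?_, hbddQ,
    fun n => sInf (e '' Y (g n)), fun n => sSup (e '' Y (g n)),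
    fun n => Real.isGLB_sInf (hAne n) (hAbddb n),
    fun n => Real.isLUB_sSup (hAne n) (hAbdda n), ?_, ?_, ?_⟩
  · -- parity
    cases hv3 : v.2.2 with
    | true =>
      left
      intro n a ha
      obtain ⟨c, hc, hcf⟩ := of_decide_eq_true ((hParC n).trans hv3)
      exact orbital_parity_pos (hY (g n)).1 hc ha hcf
    | false =>
      right
      intro n a ha
      have hnex := of_decide_eq_false ((hParC n).trans hv3)
      push_neg at hnex
      obtain ⟨c, hc, hcf⟩ := hpt (g n)
      exact orbital_parity_neg (hY (g n)).1 hc ha (lt_of_le_of_ne (hnex c hc) hcf)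
  · -- gap
    intro n
    obtain ⟨c, hc, hcf⟩ := hpt (g n + 1)
    have hfc : f c ∈ Y (g n + 1) := mem_orbital_apply (hY (g n + 1)).1 hc
    obtain ⟨c1, c2, hc1, hc2, h12⟩ :
        ∃ c1 c2, c1 ∈ Y (g n + 1) ∧ c2 ∈ Y (g n + 1) ∧ c1 < c2 := by
      rcases lt_or_gt_of_ne hcf with hlt' | hlt'
      · exact ⟨f c, c, hfc, hc, hlt'⟩
      · exact ⟨c, f c, hc, hfc, hlt'⟩
    have hup : sSup (e '' Y (g n)) ≤ (c1 : ℝ) := by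
      apply csSup_le (hAne n)
      rintro - ⟨x, hx, rfl⟩
      simp only [he]
      exact_mod_cast (hYlt (g n) x hx c1 hc1).le
    have hlow : (c2 : ℝ) ≤ sInf (e '' Y (g (n+1))) := by
      apply le_csInf (hAne (n+1))
      rintro - ⟨x, hx, rfl⟩
      simp only [he]
      exact_mod_cast (hlt (g n + 1) (g (n+1)) (hggap n) c2 hc2 x hx).le
    calc sSup (e '' Y (g n)) ≤ (c1 : ℝ) := hup
      _ < (c2 : ℝ) := by exact_mod_cast h12
      _ ≤ sInf (e '' Y (g (n+1))) := hlow
  · -- infima rationality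
    cases hv1 : v.1 with
    | true =>
      left
      intro n
      exact of_decide_eq_true ((hInfC n).trans hv1)
    | false =>
      right
      intro n q hq
      exact (of_decide_eq_false ((hInfC n).trans hv1)) ⟨q, hq⟩
  · -- suprema rationality
    cases hv2 : v.2.1 with
    | true =>
      left
      intro n
      exact of_decide_eq_true ((hSupC n).trans hv2)
    | false =>
      right
      intro n q hq
      exact (of_decide_eq_false ((hSupC n).trans hv2)) ⟨q, hq⟩
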